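/- Let g and q be forms of degree 2e such that g^k(g-q) and q^k(g-q) are sos for some k ≥ 1, and g, q are sos. Then for every r ≥ 2k, the form g^r - q^r is a sum of squares. -/

import Mathlib

open MvPolynomial Finsupp

/-- `f` is a sum of squares of forms of degree `d` in `n` variables. -/
def IsSOSForm (n d : ℕ) (f : MvPolynomial (Fin n) ℝ) : Prop :=
  ∃ (N : ℕ) (g : Fin N → MvPolynomial (Fin n) ℝ),
    (∀ i, (g i).IsHomogeneous d) ∧ f = ∑ i, (g i) ^ 2

/-- The cone `Σ_{2d}` of sums of squares of degree-`d` forms, as a subset of the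
finite-dimensional real vector space `R[x]_{2d}` of forms of degree `2d`. -/
def SigmaCone (n d : ℕ) : Set (homogeneousSubmodule (Fin n) ℝ (2 * d)) :=
  {f | IsSOSForm n d (f : MvPolynomial (Fin n) ℝ)}

/-- The canonical topology on the finite-dimensional real vector space of forms. -/
noncomputable instance (n d : ℕ) : TopologicalSpace (homogeneousSubmodule (Fin n) ℝ d) :=
  moduleTopology ℝ _

/-- A form is positive definite if it is positive away from the origin. -/
def PosDefForm (n : ℕ) (f : MvPolynomial (Fin n) ℝ) : Prop :=
  ∀ x : Fin n → ℝ, x ≠ 0 → 0 < eval x f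

/-- For a sos form `f` of degree `2d`, the set `U_f` of forms `p` of degree `d`
such that `f - c p ^ 2` is sos for some `c > 0`. -/
def Uset (n d : ℕ) (f : MvPolynomial (Fin n) ℝ) : Set (MvPolynomial (Fin n) ℝ) :=
  {p | p.IsHomogeneous d ∧ ∃ c : ℝ, 0 < c ∧ IsSOSForm n d (f - c • p ^ 2)}


namespace IsSOSForm

variable {n : ℕ}

lemma zero (d : ℕ) : IsSOSForm n d 0 :=
  ⟨0, Fin.elim0, fun i => i.elim0, by simp⟩

lemma one : IsSOSForm n 0 1 :=
  ⟨1, fun _ => 1, fun _ => isHomogeneous_one _ _, by simp⟩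

lemma add {d : ℕ} {f h : MvPolynomial (Fin n) ℝ} (hf : IsSOSForm n d f) (hh : IsSOSForm n d h) :
    IsSOSForm n d (f + h) := by
  obtain ⟨N, a, ha, rfl⟩ := hf
  obtain ⟨M, b, hb, rfl⟩ := hh
  refine ⟨N + M, Fin.append a b, Fin.addCases (by simpa using ha) (by simpa using hb), ?_⟩
  simp [Fin.sum_univ_add]

lemma sum {d : ℕ} {ι : Type*} (s : Finset ι) {f : ι → MvPolynomial (Fin n) ℝ}
    (hf : ∀ i ∈ s, IsSOSForm n d (f i)) : IsSOSForm n d (∑ i ∈ s, f i) :=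
  Finset.sum_induction f _ (fun _ _ => add) (zero d) hf

lemma mul {d₁ d₂ : ℕ} {f h : MvPolynomial (Fin n) ℝ}
    (hf : IsSOSForm n d₁ f) (hh : IsSOSForm n d₂ h) : IsSOSForm n (d₁ + d₂) (f * h) := by
  obtain ⟨N, a, ha, rfl⟩ := hf
  obtain ⟨M, b, hb, rfl⟩ := hh
  let c : Fin N × Fin M → MvPolynomial (Fin n) ℝ := fun p => a p.1 * b p.2
  refine ⟨N * M, c ∘ finProdFinEquiv.symm, fun i => (ha _).mul (hb _), ?_⟩
  rw [Finset.sum_mul_sum, Function.comp_def, Equiv.sum_comp finProdFinEquiv.symm (c · ^ 2)]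
  simp [c, mul_pow, Fintype.sum_prod_type]

lemma pow {d : ℕ} {f : MvPolynomial (Fin n) ℝ} (hf : IsSOSForm n d f) (m : ℕ) :
    IsSOSForm n (d * m) (f ^ m) := by
  induction m with
  | zero => simpa using one
  | succ m ih => simpa [pow_succ, Nat.mul_succ] using ih.mul hf

end IsSOSForm

/-- Since `2 * k ≤ r`, one of `j`, `r - 1 - j` is at least `k`, so this summand of
`g ^ r - q ^ r = ∑ j < r, g ^ j * q ^ (r - 1 - j) * (g - q)` has `g ^ k * (g - q)` or
`q ^ k * (g - q)` as a factor, the rest being a product of powers of `g` and `q`. -/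
lemma isSOSForm_geom_sum₂_term {n e k r j : ℕ} {g q : MvPolynomial (Fin n) ℝ}
    (hgs : IsSOSForm n e g) (hqs : IsSOSForm n e q)
    (h1 : IsSOSForm n (e * (k + 1)) (g ^ k * (g - q)))
    (h2 : IsSOSForm n (e * (k + 1)) (q ^ k * (g - q))) (hr : 2 * k ≤ r) (hj : j < r) :
    IsSOSForm n (e * r) (g ^ j * q ^ (r - 1 - j) * (g - q)) := by
  rcases le_or_gt k j with hkj | hjk
  · obtain ⟨a, rfl⟩ := Nat.exists_eq_add_of_le hkj
    have hdeg : e * r = e * a + e * (r - 1 - (k + a)) + e * (k + 1) := by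
      simp only [← Nat.mul_add]; congr 1; omega
    rw [hdeg, show g ^ (k + a) * q ^ (r - 1 - (k + a)) * (g - q)
      = g ^ a * q ^ (r - 1 - (k + a)) * (g ^ k * (g - q)) by ring]
    exact ((hgs.pow a).mul (hqs.pow _)).mul h1
  · obtain ⟨b, hb⟩ := Nat.exists_eq_add_of_le (show k ≤ r - 1 - j by omega)
    have hdeg : e * r = e * j + e * b + e * (k + 1) := by
      simp only [← Nat.mul_add]; congr 1; omega
    rw [hdeg, hb, show g ^ j * q ^ (k + b) * (g - q) = g ^ j * q ^ b * (q ^ k * (g - q)) by ring]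
    exact ((hgs.pow j).mul (hqs.pow b)).mul h2

theorem pow_sub_pow_sos_general (n e k : ℕ) (g q : MvPolynomial (Fin n) ℝ)
    (hgs : IsSOSForm n e g) (hqs : IsSOSForm n e q)
    (h1 : IsSOSForm n (e * (k + 1)) (g ^ k * (g - q)))
    (h2 : IsSOSForm n (e * (k + 1)) (q ^ k * (g - q))) :
    ∀ r : ℕ, 2 * k ≤ r → IsSOSForm n (e * r) (g ^ r - q ^ r) := by
  intro r hr
  rw [← geom_sum₂_mul, Finset.sum_mul]
  exact IsSOSForm.sum _ fun j hj =>
    isSOSForm_geom_sum₂_term hgs hqs h1 h2 hr (Finset.mem_range.mp hj)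

theorem pow_sub_pow_sos (n e k : ℕ) (hk : 1 ≤ k) (g q : MvPolynomial (Fin n) ℝ)
    (hg : g.IsHomogeneous (2 * e)) (hq : q.IsHomogeneous (2 * e))
    (hgs : IsSOSForm n e g) (hqs : IsSOSForm n e q)
    (h1 : IsSOSForm n (e * (k + 1)) (g ^ k * (g - q)))
    (h2 : IsSOSForm n (e * (k + 1)) (q ^ k * (g - q))) :
    ∀ r : ℕ, 2 * k ≤ r → IsSOSForm n (e * r) (g ^ r - q ^ r) :=
  pow_sub_pow_sos_general n e k g q hgs hqs h1 h2
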